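/- arXiv:2506.04680 — 2 statements merged into one kernel-verified Lean document; each statement's English description precedes it below -/
import Mathlib

section
/- Let A be the 5×5 block matrix A = [[0, I₂, 0],[-M⁻¹G, -M⁻¹V, -M⁻¹g],[0, 0, -η]] and B the 5×2 block matrix B = [0; M⁻¹; 0], where M is an invertible 2×2 real matrix, G, V are 2×2 real matrices, g is a 2×1 real vector, and η > 0. If w ∈ ℝ⁵ satisfies wᵀB = 0 and wᵀA = λwᵀ for some complex λ with Re(λ) ≥ 0, then w = 0. Consequently, the pair (A,B) is stabilizable. -/
/-! Write `w = (w₁, w₂, w₃)` and `N = M⁻¹`. Since `wᵀB = w₂ᵀN` and `N` is invertible, `wᵀB = 0`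
forces `w₂ = 0`. Then `wᵀA = (0, w₁, -η w₃)`, and comparing with `λ wᵀ` in the middle block gives
`w₁ = λ w₂ = 0`, while the last entry gives `(λ + η) w₃ = 0` with `Re (λ + η) > 0`.

For stabilizability, `B M = [0; I₂; 0]`, so the feedback `K = M R` can cancel the second block row
of `A` and replace it by `[-I₂, -2 I₂, 0]`: every channel becomes `ẍ + 2ẋ + x = 0`, and the
closed-loop characteristic polynomial is `(μ + 1)⁴ (μ + η)`. -/

open Matrix

/-- A real square matrix is Hurwitz if all its (complex) eigenvalues have
negative real part. -/
def Hurwitz {n : ℕ} (A : Matrix (Fin n) (Fin n) ℝ) : Prop :=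
  ∀ μ ∈ spectrum ℂ (A.map (fun x : ℝ => (x : ℂ))), μ.re < 0

open Complex

theorem Hurwitz.of_det_ne_zero {n : ℕ} {A : Matrix (Fin n) (Fin n) ℝ}
    (h : ∀ μ : ℂ, 0 ≤ μ.re → (μ • 1 - A.map ofReal).det ≠ 0) : Hurwitz A := by
  intro μ hμ
  by_contra! hre
  rw [spectrum.mem_iff, Algebra.algebraMap_eq_smul_one, isUnit_iff_isUnit_det,
    isUnit_iff_ne_zero] at hμ
  exact hμ (h μ hre)

theorem ofReal_vecMul {m n : Type*} [Fintype m] (w : m → ℝ) (A : Matrix m n ℝ) (j : n) :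
    (((w ᵥ* A) j : ℝ) : ℂ) = ((fun i => (w i : ℂ)) ᵥ* A.map ofReal) j :=
  RingHom.map_vecMul ofRealHom A w j

theorem add_ne_zero_of_re_nonneg {μ : ℂ} (hμ : 0 ≤ μ.re) {c : ℝ} (hc : 0 < c) : μ + c ≠ 0 := by
  intro h
  have := congrArg re h
  simp only [add_re, ofReal_re, zero_re] at this
  linarith

section ErrorDynamics

variable (N G V : Matrix (Fin 2) (Fin 2) ℝ) (g : Fin 2 → ℝ) (η : ℝ)

def stateMatrix : Matrix (Fin 5) (Fin 5) ℝ :=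
  !![0, 0, 1, 0, 0;
     0, 0, 0, 1, 0;
     -((N*G) 0 0), -((N*G) 0 1), -((N*V) 0 0), -((N*V) 0 1), -((N *ᵥ g) 0);
     -((N*G) 1 0), -((N*G) 1 1), -((N*V) 1 0), -((N*V) 1 1), -((N *ᵥ g) 1);
     0, 0, 0, 0, -η]

def inputMatrix : Matrix (Fin 5) (Fin 2) ℝ :=
  !![0, 0; 0, 0; N 0 0, N 0 1; N 1 0, N 1 1; 0, 0]

def closedLoop : Matrix (Fin 5) (Fin 5) ℝ :=
  !![0, 0, 1, 0, 0;
     0, 0, 0, 1, 0;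
     -1, 0, -2, 0, 0;
     0, -1, 0, -2, 0;
     0, 0, 0, 0, -η]

def feedbackGain : Matrix (Fin 2) (Fin 5) ℝ :=
  !![1 - (N*G) 0 0, -((N*G) 0 1), 2 - (N*V) 0 0, -((N*V) 0 1), -((N *ᵥ g) 0);
     -((N*G) 1 0), 1 - (N*G) 1 1, -((N*V) 1 0), 2 - (N*V) 1 1, -((N *ᵥ g) 1)]

variable {N G V g η}

theorem vecMul_inputMatrix (w : Fin 5 → ℝ) : w ᵥ* inputMatrix N = ![w 2, w 3] ᵥ* N := by
  ext j
  fin_cases j <;> simp [inputMatrix, vecMul, dotProduct, Fin.sum_univ_five, Fin.sum_univ_two]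

theorem vecMul_stateMatrix {w : Fin 5 → ℝ} (h2 : w 2 = 0) (h3 : w 3 = 0) :
    w ᵥ* stateMatrix N G V g η = ![0, 0, w 0, w 1, -η * w 4] := by
  ext j
  fin_cases j <;> simp [stateMatrix, vecMul, dotProduct, Fin.sum_univ_five, h2, h3, mul_comm]

theorem inputMatrix_mul (M : Matrix (Fin 2) (Fin 2) ℝ) :
    inputMatrix N * M = inputMatrix (N * M) := by
  ext i j
  fin_cases i <;> fin_cases j <;> simp [inputMatrix, mul_apply, Fin.sum_univ_two]

theorem stateMatrix_sub_inputMatrix_one_mul_feedbackGain :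
    stateMatrix N G V g η - inputMatrix 1 * feedbackGain N G V g = closedLoop η := by
  ext i j
  fin_cases i <;> fin_cases j <;>
    simp [stateMatrix, inputMatrix, feedbackGain, closedLoop, mul_apply, Fin.sum_univ_two] <;> ring

theorem det_closedLoop (μ : ℂ) :
    (μ • 1 - (closedLoop η).map ofReal).det = (μ + 1) ^ 4 * (μ + η) := by
  simp +decide [closedLoop, det_succ_row_zero, Fin.sum_univ_succ, Fin.succAbove, one_apply]
  ring

theorem hurwitz_closedLoop (hη : 0 < η) : Hurwitz (closedLoop η) := by
  refine Hurwitz.of_det_ne_zero fun μ hμ => ?_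
  rw [det_closedLoop]
  exact mul_ne_zero (pow_ne_zero _ (by exact_mod_cast add_ne_zero_of_re_nonneg hμ one_pos))
    (add_ne_zero_of_re_nonneg hμ hη)

theorem eq_zero_of_vecMul_inputMatrix_eq_zero (hN : IsUnit N.det) (hη : 0 < η)
    {w : Fin 5 → ℝ} {lam : ℂ} (hre : 0 ≤ lam.re)
    (hwB : (fun i => (w i : ℂ)) ᵥ* (inputMatrix N).map ofReal = 0)
    (hwA : (fun i => (w i : ℂ)) ᵥ* (stateMatrix N G V g η).map ofReal = lam • fun i => (w i : ℂ)) :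
    w = 0 := by
  have hwB' : w ᵥ* inputMatrix N = 0 := funext fun j => by
    simpa [← ofReal_vecMul] using congrFun hwB j
  have hvel : ![w 2, w 3] = 0 :=
    eq_zero_of_vecMul_eq_zero hN.ne_zero (vecMul_inputMatrix w ▸ hwB')
  have h2 : w 2 = 0 := congrFun hvel 0
  have h3 : w 3 = 0 := congrFun hvel 1
  have hcol (j : Fin 5) : ((![0, 0, w 0, w 1, -η * w 4] j : ℝ) : ℂ) = lam * w j := by
    simpa [← ofReal_vecMul, vecMul_stateMatrix h2 h3] using congrFun hwA j
  have h0 : w 0 = 0 := by simpa [h2] using hcol 2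
  have h1 : w 1 = 0 := by simpa [h3] using hcol 3
  have h4 : w 4 = 0 := by
    have h := hcol 4
    simp only [cons_val, ofReal_mul, ofReal_neg] at h
    have : (lam + η) * w 4 = 0 := by linear_combination -h
    exact_mod_cast (mul_eq_zero.1 this).resolve_left (add_ne_zero_of_re_nonneg hre hη)
  ext i
  fin_cases i <;> assumption

end ErrorDynamics

/-- Hautus-type stabilizability for the bipedal-robot error dynamics:
any left eigenvector of `A` with eigenvalue of nonnegative real part that is
annihilated by `B` must vanish; consequently `(A, B)` is stabilizable. -/
theorem stmt_0 (M G V : Matrix (Fin 2) (Fin 2) ℝ) (g : Fin 2 → ℝ) (η : ℝ)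
    (hM : IsUnit M.det) (hη : 0 < η)
    (N : Matrix (Fin 2) (Fin 2) ℝ) (hN : N = M⁻¹)
    (A : Matrix (Fin 5) (Fin 5) ℝ)
    (hA : A = !![0, 0, 1, 0, 0;
                 0, 0, 0, 1, 0;
                 -((N*G) 0 0), -((N*G) 0 1), -((N*V) 0 0), -((N*V) 0 1), -((N *ᵥ g) 0);
                 -((N*G) 1 0), -((N*G) 1 1), -((N*V) 1 0), -((N*V) 1 1), -((N *ᵥ g) 1);
                 0, 0, 0, 0, -η])
    (B : Matrix (Fin 5) (Fin 2) ℝ)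
    (hB : B = !![0, 0; 0, 0; N 0 0, N 0 1; N 1 0, N 1 1; 0, 0]) :
    (∀ (w : Fin 5 → ℝ) (lam : ℂ), 0 ≤ lam.re →
      (fun i => ((w i : ℂ))) ᵥ* (B.map (fun x : ℝ => (x : ℂ))) = 0 →
      (fun i => ((w i : ℂ))) ᵥ* (A.map (fun x : ℝ => (x : ℂ)))
        = lam • (fun i => ((w i : ℂ))) →
      w = 0) ∧
    ∃ K : Matrix (Fin 2) (Fin 5) ℝ, Hurwitz (A - B * K) := by
  change A = stateMatrix N G V g η at hA
  change B = inputMatrix N at hB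
  subst hA hB
  have hNdet : IsUnit N.det := hN ▸ M.isUnit_nonsing_inv_det hM
  refine ⟨fun w lam hre hwB hwA => eq_zero_of_vecMul_inputMatrix_eq_zero hNdet hη hre hwB hwA,
    M * feedbackGain N G V g, ?_⟩
  rw [← Matrix.mul_assoc, inputMatrix_mul, hN, M.nonsing_inv_mul hM,
    stateMatrix_sub_inputMatrix_one_mul_feedbackGain]
  exact hurwitz_closedLoop hη
end

section
/- If the pair (A,B) is stabilizable and (A,C) is detectable (A ∈ ℝ^{n×n}, B ∈ ℝ^{n×m}, C ∈ ℝ^{p×n}), R ≻ 0 and Q = CᵀC ⪰ 0, and P ⪰ 0 solves the algebraic Riccati equation PA + AᵀP − PBR⁻¹BᵀP + Q = 0, then the closed-loop matrix A − BR⁻¹BᵀP is Hurwitz (all eigenvalues have negative real part), and consequently every solution of ẋ = (A − BR⁻¹BᵀP)x converges to 0 as t → ∞. -/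
/-!
Let `K = A - B R⁻¹ Bᵀ P`. The Riccati equation rewrites as the Lyapunov identity
`Kᵀ P + P K = -(Cᵀ C + (Bᵀ P)ᵀ R⁻¹ (Bᵀ P))`. Evaluating it at a complex eigenvector `v` of `K`
with eigenvalue `μ` gives `2 Re μ · v* P v = -(‖C v‖² + w* R⁻¹ w)` with `w = Bᵀ P v`. If `Re μ ≥ 0`,
positivity of `P` and `R⁻¹` forces `C v = 0` and `w = 0`, so `A v = K v = μ v` and
`(A - L C) v = μ v` for every `L`, contradicting detectability. Hence `K` is Hurwitz.

Every solution of `ẋ = K x` is `exp (t K) x(0)`. Over `ℂ`, every vector is a sum of generalized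
eigenvectors, and on a generalized eigenvector for `μ` the exponential is `e^{t μ}` times a
polynomial in `t`, which tends to `0` when `Re μ < 0`.
-/

open Matrix

open Filter Topology NormedSpace ComplexOrder

variable {l m n : Type*}

namespace Matrix

def complexify (M : Matrix m n ℝ) : Matrix m n ℂ := M.map Complex.ofRealHom

@[simp]
theorem complexify_apply (M : Matrix m n ℝ) (i : m) (j : n) : M.complexify i j = M i j := rfl

@[simp]
theorem complexify_add (M N : Matrix m n ℝ) :
    (M + N).complexify = M.complexify + N.complexify := by
  ext i j
  simp

@[simp]
theorem complexify_sub (M N : Matrix m n ℝ) :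
    (M - N).complexify = M.complexify - N.complexify := by
  ext i j
  simp

@[simp]
theorem complexify_neg (M : Matrix m n ℝ) : (-M).complexify = -M.complexify := by
  ext i j
  simp

@[simp]
theorem complexify_transpose (M : Matrix m n ℝ) : Mᵀ.complexify = M.complexifyᴴ := by
  ext i j
  simp

@[simp]
theorem complexify_mul [Fintype m] (M : Matrix l m ℝ) (N : Matrix m n ℝ) :
    (M * N).complexify = M.complexify * N.complexify :=
  Matrix.map_mul

theorem complexify_mulVec_ofReal [Fintype n] (M : Matrix m n ℝ) (x : n → ℝ) :
    M.complexify *ᵥ (fun i => (x i : ℂ)) = fun i => ((M *ᵥ x) i : ℂ) := by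
  ext i
  simp [mulVec, dotProduct]

theorem PosSemidef.complexify [Fintype n] [DecidableEq n] {M : Matrix n n ℝ}
    (hM : M.PosSemidef) : M.complexify.PosSemidef := by
  open scoped MatrixOrder in
  obtain ⟨D, rfl⟩ := CStarAlgebra.nonneg_iff_eq_star_mul_self.mp hM.nonneg
  rw [star_eq_conjTranspose, conjTranspose_eq_transpose_of_trivial, complexify_mul,
    complexify_transpose]
  exact posSemidef_conjTranspose_mul_self _

theorem PosDef.complexify [Fintype n] [DecidableEq n] {M : Matrix n n ℝ} (hM : M.PosDef) :
    M.complexify.PosDef :=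
  hM.posSemidef.complexify.posDef_iff_isUnit.mpr <|
    hM.isUnit.map (RingHom.mapMatrix Complex.ofRealHom : Matrix n n ℝ →+* Matrix n n ℂ)

theorem mem_spectrum_iff_exists_mulVec_eq_smul [Fintype n] [DecidableEq n] {K : Type*} [Field K]
    {M : Matrix n n K} {μ : K} : μ ∈ spectrum K M ↔ ∃ v ≠ 0, M *ᵥ v = μ • v := by
  rw [← spectrum_toLin', ← Module.End.hasEigenvalue_iff_mem_spectrum,
    Module.End.hasEigenvalue_iff, Submodule.ne_bot_iff]
  simp only [Module.End.mem_eigenspace_iff, toLin'_apply]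
  grind

theorem star_dotProduct_conjTranspose_mul_mulVec [Fintype m] [Fintype n] {R : Type*} [CommRing R]
    [StarRing R] (M N : Matrix m n R) (v : n → R) :
    star v ⬝ᵥ (Mᴴ * N) *ᵥ v = star (M *ᵥ v) ⬝ᵥ N *ᵥ v := by
  rw [← mulVec_mulVec, dotProduct_mulVec, vecMul_conjTranspose, star_star]

end Matrix

section Riccati

variable [Fintype l] [Fintype m] [Fintype n]

theorem star_dotProduct_mulVec_of_lyapunov {K P W : Matrix n n ℂ} (hK : Kᴴ * P + P * K = -W)
    {μ : ℂ} {v : n → ℂ} (hv : K *ᵥ v = μ • v) :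
    ((2 * μ.re : ℝ) : ℂ) * (star v ⬝ᵥ P *ᵥ v) = -(star v ⬝ᵥ W *ᵥ v) := by
  have hKP : star v ⬝ᵥ (Kᴴ * P) *ᵥ v = starRingEnd ℂ μ * (star v ⬝ᵥ P *ᵥ v) := by
    rw [star_dotProduct_conjTranspose_mul_mulVec, hv, star_smul, smul_dotProduct, smul_eq_mul]
    rfl
  have hPK : star v ⬝ᵥ (P * K) *ᵥ v = μ * (star v ⬝ᵥ P *ᵥ v) := by
    rw [← mulVec_mulVec, hv, mulVec_smul, dotProduct_smul, smul_eq_mul]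
  rw [← Complex.add_conj, add_comm μ, add_mul, ← hKP, ← hPK, ← dotProduct_add, ← add_mulVec, hK,
    neg_mulVec, dotProduct_neg]

theorem lyapunov_closedLoop_of_riccati [DecidableEq m] {A P : Matrix n n ℝ} {B : Matrix n m ℝ}
    {R : Matrix m m ℝ} {C : Matrix l n ℝ} (hP : Pᵀ = P) (hR : Rᵀ = R)
    (hric : P * A + Aᵀ * P - P * B * R⁻¹ * Bᵀ * P + Cᵀ * C = 0) :
    (A - B * R⁻¹ * Bᵀ * P)ᵀ * P + P * (A - B * R⁻¹ * Bᵀ * P) =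
      -(Cᵀ * C + (Bᵀ * P)ᵀ * R⁻¹ * (Bᵀ * P)) := by
  have hQ : Cᵀ * C = -(P * A + Aᵀ * P - P * B * R⁻¹ * Bᵀ * P) := eq_neg_of_add_eq_zero_right hric
  simp only [transpose_sub, transpose_mul, transpose_transpose, transpose_nonsing_inv, hP, hR, hQ,
    Matrix.sub_mul, Matrix.mul_sub, Matrix.mul_assoc]
  abel

theorem unobservable_eigenvector_of_riccati [DecidableEq m] [DecidableEq n] {A P : Matrix n n ℝ}
    {B : Matrix n m ℝ} {R : Matrix m m ℝ} {C : Matrix l n ℝ} (hR : R.PosDef) (hP : P.PosSemidef)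
    (hric : P * A + Aᵀ * P - P * B * R⁻¹ * Bᵀ * P + Cᵀ * C = 0) {μ : ℂ} {v : n → ℂ}
    (hv : (A - B * R⁻¹ * Bᵀ * P).complexify *ᵥ v = μ • v) (hμ : 0 ≤ μ.re) :
    C.complexify *ᵥ v = 0 ∧ A.complexify *ᵥ v = μ • v := by
  have hPt : Pᵀ = P := by simpa using hP.isHermitian.eq
  have hRt : Rᵀ = R := by simpa using hR.isHermitian.eq
  set G := (Bᵀ * P).complexify
  have hlyap : (A - B * R⁻¹ * Bᵀ * P).complexifyᴴ * P.complexify +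
      P.complexify * (A - B * R⁻¹ * Bᵀ * P).complexify =
      -(C.complexifyᴴ * C.complexify + Gᴴ * ((R⁻¹).complexify * G)) := by
    simpa [G, Matrix.mul_assoc] using
      congrArg complexify (lyapunov_closedLoop_of_riccati hPt hRt hric)
  have key := star_dotProduct_mulVec_of_lyapunov hlyap hv
  rw [add_mulVec, dotProduct_add, star_dotProduct_conjTranspose_mul_mulVec,
    star_dotProduct_conjTranspose_mul_mulVec, ← mulVec_mulVec] at key
  have hCv : 0 ≤ star (C.complexify *ᵥ v) ⬝ᵥ C.complexify *ᵥ v := dotProduct_star_self_nonneg _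
  have hGv : 0 ≤ star (G *ᵥ v) ⬝ᵥ (R⁻¹).complexify *ᵥ (G *ᵥ v) :=
    hR.inv.complexify.posSemidef.dotProduct_mulVec_nonneg _
  have hPv : 0 ≤ ((2 * μ.re : ℝ) : ℂ) * (star v ⬝ᵥ P.complexify *ᵥ v) :=
    mul_nonneg (by exact_mod_cast by positivity) (hP.complexify.dotProduct_mulVec_nonneg v)
  obtain ⟨hCv0, hGv0⟩ := (add_eq_zero_iff_of_nonneg hCv hGv).mp <|
    le_antisymm (by rw [← neg_nonneg, ← key]; exact hPv) (add_nonneg hCv hGv)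
  have hG : G *ᵥ v = 0 := by
    by_contra hne
    exact (hR.inv.complexify.dotProduct_mulVec_pos hne).ne' hGv0
  refine ⟨dotProduct_star_self_eq_zero.mp hCv0, ?_⟩
  have hA : A.complexify = (A - B * R⁻¹ * Bᵀ * P).complexify + (B * R⁻¹).complexify * G := by
    simp [G, Matrix.mul_assoc]
  rw [hA, add_mulVec, hv, ← mulVec_mulVec, hG, mulVec_zero, add_zero]

end Riccati

theorem hurwitz_closedLoop_of_riccati {n m p : ℕ} {A P : Matrix (Fin n) (Fin n) ℝ}
    {B : Matrix (Fin n) (Fin m) ℝ} {R : Matrix (Fin m) (Fin m) ℝ} {C : Matrix (Fin p) (Fin n) ℝ}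
    (hdet : ∃ L : Matrix (Fin n) (Fin p) ℝ, Hurwitz (A - L * C)) (hR : R.PosDef)
    (hP : P.PosSemidef) (hric : P * A + Aᵀ * P - P * B * R⁻¹ * Bᵀ * P + Cᵀ * C = 0) :
    Hurwitz (A - B * R⁻¹ * Bᵀ * P) := by
  obtain ⟨L, hL⟩ := hdet
  intro μ hμ
  obtain ⟨v, hv0, hv⟩ := mem_spectrum_iff_exists_mulVec_eq_smul.mp hμ
  by_contra! hμre
  obtain ⟨hCv, hAv⟩ := unobservable_eigenvector_of_riccati hR hP hric hv hμre
  have hLv : (A - L * C).complexify *ᵥ v = μ • v := by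
    rw [complexify_sub, sub_mulVec, hAv, complexify_mul, ← mulVec_mulVec, hCv, mulVec_zero,
      sub_zero]
  exact (hL μ (mem_spectrum_iff_exists_mulVec_eq_smul.mpr ⟨v, hv0, hLv⟩)).not_ge hμre

theorem tendsto_cexp_mul_mul_pow_atTop_nhds_zero {μ : ℂ} (hμ : μ.re < 0) (j : ℕ) :
    Tendsto (fun t : ℝ => Complex.exp (t * μ) * (t : ℂ) ^ j) atTop (𝓝 0) := by
  rw [tendsto_zero_iff_norm_tendsto_zero]
  refine (tendsto_rpow_mul_exp_neg_mul_atTop_nhds_zero j (-μ.re) (neg_pos.mpr hμ)).congr' ?_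
  filter_upwards [eventually_ge_atTop 0] with t ht
  rw [norm_mul, Complex.norm_exp, norm_pow, Complex.norm_real, Real.norm_of_nonneg ht,
    Real.rpow_natCast, Complex.re_ofReal_mul]
  ring_nf

section Exponential

/- Statements use the product topology on matrices; the operator norm is opened only locally,
where a lemma about normed algebras is invoked. -/

variable [Fintype n] [DecidableEq n]

theorem Matrix.exp_mulVec_eq_sum_of_pow_mulVec_eq_zero {N : Matrix n n ℂ} {v : n → ℂ} {k : ℕ}
    (hv : N ^ k *ᵥ v = 0) :
    exp N *ᵥ v = ∑ j ∈ Finset.range k, (j.factorial⁻¹ : ℂ) • (N ^ j *ᵥ v) := by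
  have hexp : HasSum (fun j => (j.factorial⁻¹ : ℂ) • N ^ j) (exp N) :=
    open scoped Norms.Operator in exp_series_hasSum_exp' N
  have hsum : HasSum (fun j => (j.factorial⁻¹ : ℂ) • (N ^ j *ᵥ v)) (exp N *ᵥ v) := by
    simpa using hexp.mapL ((mulVecBilin ℂ ℂ).flip v).toContinuousLinearMap
  refine hsum.unique (hasSum_sum_of_ne_finset_zero fun j hj => ?_)
  obtain ⟨i, rfl⟩ := Nat.exists_eq_add_of_le' (not_lt.mp (Finset.mem_range.not.mp hj))
  rw [pow_add, ← mulVec_mulVec, hv, mulVec_zero, smul_zero]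

theorem Matrix.exp_smul_eq_exp_mul_smul_exp_smul_sub (M : Matrix n n ℂ) (c μ : ℂ) :
    exp (c • M) = Complex.exp (c * μ) • exp (c • (M - μ • 1)) := by
  have hcomm : Commute (algebraMap ℂ _ (c * μ)) (c • (M - μ • 1)) := Algebra.commutes _ _
  have hscalar : algebraMap ℂ (Matrix n n ℂ) (exp (c * μ)) = exp (algebraMap ℂ _ (c * μ)) :=
    open scoped Norms.Operator in algebraMap_exp_comm (c * μ)
  rw [Complex.exp_eq_exp_ℂ, Algebra.smul_def (exp (c * μ)), hscalar,
    ← Matrix.exp_add_of_commute _ _ hcomm, Algebra.algebraMap_eq_smul_one, smul_sub, smul_smul]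
  congr 1
  abel

theorem Matrix.complexify_exp_smul (A : Matrix n n ℝ) (t : ℝ) :
    (exp (t • A)).complexify = exp ((t : ℂ) • A.complexify) := by
  have hcont : Continuous (RingHom.mapMatrix Complex.ofRealHom : Matrix n n ℝ →+* Matrix n n ℂ) :=
    continuous_id.matrix_map Complex.continuous_ofReal
  refine (open scoped Norms.Operator in map_exp _ hcont (t • A)).trans ?_
  congr 1
  ext i j
  simp

theorem eq_exp_smul_mulVec_of_hasDerivAt {A : Matrix n n ℝ} {x : ℝ → n → ℝ}
    (hx : ∀ t, HasDerivAt x (A *ᵥ x t) t) : x = fun t => exp (t • A) *ᵥ x 0 := by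
  have hsol (t : ℝ) :
      HasDerivAt (fun s : ℝ => exp (s • A) *ᵥ x 0) (A *ᵥ (exp (t • A) *ᵥ x 0)) t := by
    rw [mulVec_mulVec]
    open scoped Norms.Operator in
    exact ((mulVecBilin ℝ ℝ).flip (x 0)).toContinuousLinearMap.hasFDerivAt.comp_hasDerivAt t
      (hasDerivAt_exp_smul_const' A t)
  exact ODE_solution_unique_univ (v := fun _ y => A *ᵥ y) (s := fun _ => Set.univ) (t₀ := 0)
    (fun _ => (mulVecLin A).toContinuousLinearMap.lipschitz.lipschitzOnWith)
    (fun t => ⟨hx t, trivial⟩) (fun t => ⟨hsol t, trivial⟩) (by simp)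

theorem tendsto_exp_smul_mulVec_of_pow_sub_smul_mulVec_eq_zero {M : Matrix n n ℂ} {μ : ℂ}
    (hμ : μ.re < 0) {k : ℕ} {v : n → ℂ} (hv : (M - μ • 1) ^ k *ᵥ v = 0) :
    Tendsto (fun t : ℝ => exp ((t : ℂ) • M) *ᵥ v) atTop (𝓝 0) := by
  have hsum (t : ℝ) : exp ((t : ℂ) • M) *ᵥ v = ∑ j ∈ Finset.range k,
      (Complex.exp (t * μ) * (t : ℂ) ^ j * (j.factorial⁻¹ : ℂ)) • ((M - μ • 1) ^ j *ᵥ v) := by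
    rw [exp_smul_eq_exp_mul_smul_exp_smul_sub M t μ, smul_mulVec,
      exp_mulVec_eq_sum_of_pow_mulVec_eq_zero (k := k), Finset.smul_sum]
    · refine Finset.sum_congr rfl fun j _ => ?_
      rw [smul_pow, smul_mulVec, smul_smul, smul_smul]
      ring_nf
    · rw [smul_pow, smul_mulVec, hv, smul_zero]
  simp_rw [hsum]
  simpa using tendsto_finsetSum _ fun j _ =>
    ((tendsto_cexp_mul_mul_pow_atTop_nhds_zero hμ j).mul_const _).smul_const ((M - μ • 1) ^ j *ᵥ v)

theorem tendsto_exp_smul_mulVec_of_forall_re_lt_zero {M : Matrix n n ℂ}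
    (hM : ∀ μ ∈ spectrum ℂ M, μ.re < 0) (v : n → ℂ) :
    Tendsto (fun t : ℝ => exp ((t : ℂ) • M) *ᵥ v) atTop (𝓝 0) := by
  have hv : v ∈ ⨆ μ, Module.End.maxGenEigenspace (toLinAlgEquiv' M) μ := by
    rw [Module.End.iSup_maxGenEigenspace_eq_top]
    trivial
  refine Submodule.iSup_induction _
    (motive := fun w => Tendsto (fun t : ℝ => exp ((t : ℂ) • M) *ᵥ w) atTop (𝓝 0)) hv
    (fun μ w hw => ?_) (by simp) fun w₁ w₂ h₁ h₂ => by simpa [mulVec_add] using h₁.add h₂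
  rcases eq_or_ne w 0 with rfl | hw0
  · simp
  have hμ : μ ∈ spectrum ℂ M := by
    rw [← AlgEquiv.spectrum_eq toLinAlgEquiv' M]
    exact Module.End.HasEigenvalue.mem_spectrum <|
      Module.End.HasUnifEigenvalue.lt zero_lt_one <| (Submodule.ne_bot_iff _).mpr ⟨w, hw, hw0⟩
  obtain ⟨k, hk⟩ := (Module.End.mem_maxGenEigenspace _ _ _).mp hw
  refine tendsto_exp_smul_mulVec_of_pow_sub_smul_mulVec_eq_zero (hM μ hμ) (k := k) ?_
  rwa [← toLinAlgEquiv'_apply, map_pow, map_sub, map_smul, map_one]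

theorem tendsto_real_exp_smul_mulVec_of_forall_re_lt_zero {A : Matrix n n ℝ}
    (hA : ∀ μ ∈ spectrum ℂ A.complexify, μ.re < 0) (x : n → ℝ) :
    Tendsto (fun t : ℝ => exp (t • A) *ᵥ x) atTop (𝓝 0) := by
  have hre : Continuous fun w : n → ℂ => fun i => (w i).re := by fun_prop
  have h := (hre.tendsto 0).comp <|
    tendsto_exp_smul_mulVec_of_forall_re_lt_zero hA fun i => (x i : ℂ)
  simp only [Function.comp_def, ← complexify_exp_smul, complexify_mulVec_ofReal,
    Complex.ofReal_re, Pi.zero_apply, Complex.zero_re] at h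
  exact h

end Exponential

theorem Hurwitz.tendsto_zero_of_hasDerivAt {n : ℕ} {A : Matrix (Fin n) (Fin n) ℝ}
    (hA : Hurwitz A) {x : ℝ → Fin n → ℝ} (hx : ∀ t, HasDerivAt x (A *ᵥ x t) t) :
    Tendsto x atTop (𝓝 0) := by
  rw [eq_exp_smul_mulVec_of_hasDerivAt hx]
  exact tendsto_real_exp_smul_mulVec_of_forall_re_lt_zero hA (x 0)

theorem stmt_6_general {n m p : ℕ}
    (A : Matrix (Fin n) (Fin n) ℝ) (B : Matrix (Fin n) (Fin m) ℝ)
    (C : Matrix (Fin p) (Fin n) ℝ)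
    (R : Matrix (Fin m) (Fin m) ℝ) (Q : Matrix (Fin n) (Fin n) ℝ)
    (P : Matrix (Fin n) (Fin n) ℝ)
    (hdet : ∃ L : Matrix (Fin n) (Fin p) ℝ, Hurwitz (A - L * C))
    (hR : R.PosDef) (hQ : Q = Cᵀ * C) (hP : P.PosSemidef)
    (hric : P * A + Aᵀ * P - P * B * R⁻¹ * Bᵀ * P + Q = 0) :
    Hurwitz (A - B * R⁻¹ * Bᵀ * P) ∧
    ∀ x : ℝ → (Fin n → ℝ),
      (∀ t, HasDerivAt x ((A - B * R⁻¹ * Bᵀ * P) *ᵥ x t) t) →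
      Filter.Tendsto x Filter.atTop (nhds 0) := by
  subst hQ
  have hK : Hurwitz (A - B * R⁻¹ * Bᵀ * P) := hurwitz_closedLoop_of_riccati hdet hR hP hric
  exact ⟨hK, fun _ hx => hK.tendsto_zero_of_hasDerivAt hx⟩

/-- LQR/Riccati stability: if `(A,B)` is stabilizable, `(A,C)` is detectable,
`R ≻ 0`, `Q = CᵀC`, and `P ⪰ 0` solves the algebraic Riccati equation, then the
closed-loop matrix `A − BR⁻¹BᵀP` is Hurwitz and every closed-loop solution
converges to zero. -/
theorem stmt_6 {n m p : ℕ}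
    (A : Matrix (Fin n) (Fin n) ℝ) (B : Matrix (Fin n) (Fin m) ℝ)
    (C : Matrix (Fin p) (Fin n) ℝ)
    (R : Matrix (Fin m) (Fin m) ℝ) (Q : Matrix (Fin n) (Fin n) ℝ)
    (P : Matrix (Fin n) (Fin n) ℝ)
    (hstab : ∃ K : Matrix (Fin m) (Fin n) ℝ, Hurwitz (A - B * K))
    (hdet : ∃ L : Matrix (Fin n) (Fin p) ℝ, Hurwitz (A - L * C))
    (hR : R.PosDef) (hQ : Q = Cᵀ * C) (hP : P.PosSemidef)
    (hric : P * A + Aᵀ * P - P * B * R⁻¹ * Bᵀ * P + Q = 0) :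
    Hurwitz (A - B * R⁻¹ * Bᵀ * P) ∧
    ∀ x : ℝ → (Fin n → ℝ),
      (∀ t, HasDerivAt x ((A - B * R⁻¹ * Bᵀ * P) *ᵥ x t) t) →
      Filter.Tendsto x Filter.atTop (nhds 0) :=
  stmt_6_general A B C R Q P hdet hR hQ hP hric
end
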